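/- arXiv:1112.1998 — 5 statements merged into one kernel-verified Lean document; each statement's English description precedes it below -/
import Mathlib

section
/- Let b ∈ L²(Ω;ℝⁿ) and suppose that the set {x ∈ Ω : |b(x)| > a(x)} has positive Lebesgue measure. Then the functional d ↦ ⟨d,b⟩ − F(d) is unbounded above on L²(Ω;ℝⁿ); that is, the Legendre–Fenchel conjugate F*(b) = sup{⟨d,b⟩ − F(d) : d ∈ L²(Ω;ℝⁿ)} equals +∞. -/
/-!
Take `d = t • 1_S • b`, where `S ⊆ {0 ≤ a < |b|}` is a measurable set of positive measure.
Pointwise, `⟪d, b⟫ - a |d + g| ≥ t 1_S (|b|² - a |b|) - a |g|` by the triangle inequality, and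
`∫_S (|b|² - a |b|) > 0`, so the functional grows at least linearly in `t`.
-/

open MeasureTheory RealInnerProductSpace

variable {α E : Type*} [MeasurableSpace α] {μ : Measure α} [NormedAddCommGroup E]
  {a : α → ℝ} {b g : α → E} {S : Set α}

theorem integrable_mul_norm (ha : MemLp a 2 μ) (hb : MemLp b 2 μ) :
    Integrable (fun x => a x * ‖b x‖) μ :=
  ha.integrable_mul hb.norm

theorem integrable_norm_sq_sub_mul_norm (ha : MemLp a 2 μ) (hb : MemLp b 2 μ) :
    Integrable (fun x => ‖b x‖ ^ 2 - a x * ‖b x‖) μ :=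
  ((integrable_mul_norm hb.norm hb).sub (integrable_mul_norm ha hb)).congr <|
    ae_of_all _ fun x => by simp [sq]

theorem setIntegral_norm_sq_sub_mul_norm_pos (hS : MeasurableSet S) (hSpos : 0 < μ S)
    (hSab : ∀ x ∈ S, 0 ≤ a x ∧ a x < ‖b x‖) (ha : MemLp a 2 μ) (hb : MemLp b 2 μ) :
    0 < ∫ x in S, (‖b x‖ ^ 2 - a x * ‖b x‖) ∂μ := by
  have hpos : ∀ x ∈ S, 0 < ‖b x‖ ^ 2 - a x * ‖b x‖ := fun x hx => by
    obtain ⟨h0, hlt⟩ := hSab x hx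
    nlinarith
  rwa [setIntegral_pos_iff_support_of_nonneg_ae
    ((ae_restrict_iff' hS).2 (ae_of_all _ fun x hx => (hpos x hx).le))
    (integrable_norm_sq_sub_mul_norm ha hb).integrableOn,
    Set.inter_eq_right.2 fun x hx => Function.mem_support.2 (hpos x hx).ne']

variable [InnerProductSpace ℝ E]

theorem MeasureTheory.MemLp.integrable_inner {f : α → E} (hf : MemLp f 2 μ)
    (hb : MemLp b 2 μ) : Integrable (fun x => ⟪f x, b x⟫) μ :=
  (hf.norm.integrable_mul hb.norm).mono (hf.1.inner hb.1) <| ae_of_all _ fun x => by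
    simpa [abs_mul] using abs_real_inner_le_norm (f x) (b x)

theorem inner_smul_self_sub_mul_norm_add_ge {c t : ℝ} (hc : 0 ≤ c) (ht : 0 ≤ t) (v w : E) :
    t * (‖v‖ ^ 2 - c * ‖v‖) - c * ‖w‖ ≤ ⟪t • v, v⟫ - c * ‖t • v + w‖ := by
  have htri : ‖t • v + w‖ ≤ t * ‖v‖ + ‖w‖ := by
    simpa [norm_smul, abs_of_nonneg ht] using norm_add_le (t • v) w
  rw [real_inner_smul_left, real_inner_self_eq_norm_sq]
  nlinarith [mul_le_mul_of_nonneg_left htri hc]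

theorem integral_inner_indicator_smul_sub_ge (hS : MeasurableSet S)
    (hSa : ∀ x ∈ S, 0 ≤ a x) (ha : MemLp a 2 μ) (hb : MemLp b 2 μ) (hg : MemLp g 2 μ)
    {t : ℝ} (ht : 0 ≤ t) :
    t * (∫ x in S, (‖b x‖ ^ 2 - a x * ‖b x‖) ∂μ) - ∫ x, a x * ‖g x‖ ∂μ ≤
      (∫ x, ⟪S.indicator (t • b) x, b x⟫ ∂μ) - ∫ x, a x * ‖S.indicator (t • b) x + g x‖ ∂μ := by
  set d := S.indicator (t • b)
  have hd : MemLp d 2 μ := (hb.const_smul t).indicator hS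
  have h₁ := ((integrable_norm_sq_sub_mul_norm ha hb).const_mul t).indicator hS
  have h₂ := integrable_mul_norm ha hg
  have h₃ := hd.integrable_inner hb
  have h₄ : Integrable (fun x => a x * ‖d x + g x‖) μ := integrable_mul_norm ha (hd.add hg)
  calc t * (∫ x in S, (‖b x‖ ^ 2 - a x * ‖b x‖) ∂μ) - ∫ x, a x * ‖g x‖ ∂μ
      = ∫ x, (S.indicator (fun x => t * (‖b x‖ ^ 2 - a x * ‖b x‖)) x - a x * ‖g x‖) ∂μ := by
        rw [integral_sub h₁ h₂, integral_indicator hS, integral_const_mul]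
    _ ≤ ∫ x, (⟪d x, b x⟫ - a x * ‖d x + g x‖) ∂μ := by
        refine integral_mono (h₁.sub h₂) (h₃.sub h₄) fun x => ?_
        by_cases hx : x ∈ S
        · simpa [d, hx] using inner_smul_self_sub_mul_norm_add_ge (hSa x hx) ht (b x) (g x)
        · simp [d, hx]
    _ = _ := integral_sub h₃ h₄

theorem exists_memLp_lt_integral_inner_sub_integral_mul_norm (ha : MemLp a 2 μ)
    (ha0 : ∀ᵐ x ∂μ, 0 ≤ a x) (hb : MemLp b 2 μ) (hg : MemLp g 2 μ)
    (hset : 0 < μ {x | a x < ‖b x‖}) (M : ℝ) :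
    ∃ d : α → E, MemLp d 2 μ ∧ M < (∫ x, ⟪d x, b x⟫ ∂μ) - ∫ x, a x * ‖d x + g x‖ ∂μ := by
  obtain ⟨S, hSab, hS, hS_ae⟩ := ((nullMeasurableSet_lt ha.1.aemeasurable
    hb.1.norm.aemeasurable).inter (nullMeasurableSet_le aemeasurable_const
    ha.1.aemeasurable)).exists_measurable_subset_ae_eq
  have hc := setIntegral_norm_sq_sub_mul_norm_pos hS
    (by rwa [measure_congr hS_ae, measure_inter_conull (t := {x | 0 ≤ a x}) (ae_iff.1 ha0)])
    (fun x hx => (hSab hx).symm) ha hb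
  set c := ∫ x in S, (‖b x‖ ^ 2 - a x * ‖b x‖) ∂μ
  set t := max 0 ((M + ∫ x, a x * ‖g x‖ ∂μ) / c) + 1
  have ht : 0 ≤ t := by positivity
  refine ⟨S.indicator (t • b), (hb.const_smul t).indicator hS, lt_of_lt_of_le ?_
    (integral_inner_indicator_smul_sub_ge hS (fun x hx => (hSab hx).2) ha hb hg ht)⟩
  have hct : (M + ∫ x, a x * ‖g x‖ ∂μ) / c < t := by
    linarith [le_max_right 0 ((M + ∫ x, a x * ‖g x‖ ∂μ) / c)]
  linarith [(div_lt_iff₀ hc).1 hct]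

theorem stmt_0_general {n : ℕ}
    (μ : Measure (EuclideanSpace ℝ (Fin n)))
    (a : EuclideanSpace ℝ (Fin n) → ℝ) (ha2 : MemLp a 2 μ) (ha0 : ∀ᵐ x ∂μ, 0 ≤ a x)
    (g : EuclideanSpace ℝ (Fin n) → EuclideanSpace ℝ (Fin n)) (hg : MemLp g 2 μ)
    (b : EuclideanSpace ℝ (Fin n) → EuclideanSpace ℝ (Fin n)) (hb : MemLp b 2 μ)
    (hset : 0 < μ {x | a x < ‖b x‖}) :
    ∀ M : ℝ, ∃ d : EuclideanSpace ℝ (Fin n) → EuclideanSpace ℝ (Fin n),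
      MemLp d 2 μ ∧
      M < (∫ x, ⟪d x, b x⟫ ∂μ) - ∫ x, a x * ‖d x + g x‖ ∂μ :=
  exists_memLp_lt_integral_inner_sub_integral_mul_norm ha2 ha0 hb hg hset

/-- If `b ∈ L²(Ω;ℝⁿ)` and the set `{x ∈ Ω : |b(x)| > a(x)}` has positive
Lebesgue measure, then the Legendre–Fenchel conjugate
`F*(b) = sup {⟨d,b⟩ - ∫ a |d+g| : d ∈ L²(Ω;ℝⁿ)}` is `+∞`, i.e. the functional
`d ↦ ⟨d,b⟩ - F(d)` is unbounded above on `L²(Ω;ℝⁿ)`. -/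
theorem stmt_0 {n : ℕ} (hn : 2 ≤ n) (Ω : Set (EuclideanSpace ℝ (Fin n)))
    (hΩopen : IsOpen Ω) (hΩbdd : Bornology.IsBounded Ω)
    (μ : Measure (EuclideanSpace ℝ (Fin n))) (hμ : μ = volume.restrict Ω)
    (a : EuclideanSpace ℝ (Fin n) → ℝ) (ha2 : MemLp a 2 μ) (ha0 : ∀ᵐ x ∂μ, 0 ≤ a x)
    (g : EuclideanSpace ℝ (Fin n) → EuclideanSpace ℝ (Fin n)) (hg : MemLp g 2 μ)
    (b : EuclideanSpace ℝ (Fin n) → EuclideanSpace ℝ (Fin n)) (hb : MemLp b 2 μ)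
    (hset : 0 < μ {x | a x < ‖b x‖}) :
    ∀ M : ℝ, ∃ d : EuclideanSpace ℝ (Fin n) → EuclideanSpace ℝ (Fin n),
      MemLp d 2 μ ∧
      M < (∫ x, ⟪d x, b x⟫ ∂μ) - ∫ x, a x * ‖d x + g x‖ ∂μ :=
  stmt_0_general μ a ha2 ha0 g hg b hb hset
end

section
/- Let a ∈ L²(Ω) be nonnegative, let v ∈ L²(Ω;ℝⁿ), and let b₁, b₂ ∈ L²(Ω;ℝⁿ) be such that for i = 1,2 one has |b_i(x)| ≤ a(x) for a.e. x ∈ Ω and ∫_Ω a(x)|v(x)| dx = ∫_Ω b_i(x)·v(x) dx. Then b₁(x) = b₂(x) for a.e. x in the set {x ∈ Ω : v(x) ≠ 0 or a(x) = 0}; equivalently, b₁ ≡ b₂ on Ω ∖ {x : v(x) = 0 and a(x) ≠ 0}. -/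
open MeasureTheory RealInnerProductSpace

/-!
Since `‖bᵢ‖ ≤ a`, Cauchy–Schwarz gives `⟪bᵢ, v⟫ ≤ a‖v‖` pointwise, so equality of the integrals
forces `⟪bᵢ, v⟫ = a‖v‖` almost everywhere. At such a point, equality in Cauchy–Schwarz pins `bᵢ`
down to `(a/‖v‖) • v` when `v ≠ 0`, and to `0` when `a = 0`.
-/

section Pointwise

variable {F : Type*} [NormedAddCommGroup F] [InnerProductSpace ℝ F]

theorem smul_eq_of_norm_le_of_inner_eq_mul_norm {b v : F} {r : ℝ} (hb : ‖b‖ ≤ r)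
    (hbv : ⟪b, v⟫ = r * ‖v‖) (hv : v ≠ 0) : ‖v‖ • b = r • v := by
  have hv_pos : 0 < ‖v‖ := norm_pos_iff.mpr hv
  have hr_le : r ≤ ‖b‖ :=
    le_of_mul_le_mul_right (hbv ▸ real_inner_le_norm b v) hv_pos
  have hnorm : ‖b‖ = r := le_antisymm hb hr_le
  rw [← hnorm] at hbv ⊢
  exact inner_eq_norm_mul_iff_real.mp hbv

theorem eq_of_norm_le_of_inner_eq_mul_norm {b₁ b₂ v : F} {r : ℝ} (hb₁ : ‖b₁‖ ≤ r)
    (hb₂ : ‖b₂‖ ≤ r) (hb₁v : ⟪b₁, v⟫ = r * ‖v‖) (hb₂v : ⟪b₂, v⟫ = r * ‖v‖)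
    (hvr : v ≠ 0 ∨ r = 0) : b₁ = b₂ := by
  rcases hvr with hv | rfl
  · refine smul_right_injective F (norm_pos_iff.mpr hv).ne' ?_
    exact (smul_eq_of_norm_le_of_inner_eq_mul_norm hb₁ hb₁v hv).trans
      (smul_eq_of_norm_le_of_inner_eq_mul_norm hb₂ hb₂v hv).symm
  · rw [norm_le_zero_iff.mp hb₁, norm_le_zero_iff.mp hb₂]

end Pointwise

theorem ae_inner_eq_mul_norm_of_integral_eq {α F : Type*} [MeasurableSpace α]
    [NormedAddCommGroup F] [InnerProductSpace ℝ F] {μ : Measure α} {a : α → ℝ} {b v : α → F}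
    (hav : Integrable (fun x ↦ a x * ‖v x‖) μ) (hb : AEStronglyMeasurable b μ)
    (hv : AEStronglyMeasurable v μ) (hba : ∀ᵐ x ∂μ, ‖b x‖ ≤ a x)
    (heq : ∫ x, a x * ‖v x‖ ∂μ = ∫ x, ⟪b x, v x⟫ ∂μ) :
    ∀ᵐ x ∂μ, ⟪b x, v x⟫ = a x * ‖v x‖ := by
  have hle : ∀ᵐ x ∂μ, |⟪b x, v x⟫| ≤ a x * ‖v x‖ := by
    filter_upwards [hba] with x hx
    exact (abs_real_inner_le_norm _ _).trans (mul_le_mul_of_nonneg_right hx (norm_nonneg _))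
  have hbv : Integrable (fun x ↦ ⟪b x, v x⟫) μ := hav.mono' (hb.inner hv) hle
  exact (integral_eq_iff_of_ae_le hbv hav (hle.mono fun x hx ↦ (le_abs_self _).trans hx)).mp
    heq.symm

theorem stmt_5_general {n : ℕ}
    (μ : Measure (EuclideanSpace ℝ (Fin n)))
    (a : EuclideanSpace ℝ (Fin n) → ℝ) (ha2 : MemLp a 2 μ)
    (v b₁ b₂ : EuclideanSpace ℝ (Fin n) → EuclideanSpace ℝ (Fin n))
    (hv : MemLp v 2 μ) (hb₁ : MemLp b₁ 2 μ) (hb₂ : MemLp b₂ 2 μ)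
    (hba₁ : ∀ᵐ x ∂μ, ‖b₁ x‖ ≤ a x) (hba₂ : ∀ᵐ x ∂μ, ‖b₂ x‖ ≤ a x)
    (heq₁ : ∫ x, a x * ‖v x‖ ∂μ = ∫ x, ⟪b₁ x, v x⟫ ∂μ)
    (heq₂ : ∫ x, a x * ‖v x‖ ∂μ = ∫ x, ⟪b₂ x, v x⟫ ∂μ) :
    ∀ᵐ x ∂μ, (v x ≠ 0 ∨ a x = 0) → b₁ x = b₂ x := by
  have hav : Integrable (fun x ↦ a x * ‖v x‖) μ := ha2.integrable_mul hv.norm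
  filter_upwards [ae_inner_eq_mul_norm_of_integral_eq hav hb₁.1 hv.1 hba₁ heq₁,
    ae_inner_eq_mul_norm_of_integral_eq hav hb₂.1 hv.1 hba₂ heq₂, hba₁, hba₂]
    with x hb₁v hb₂v hx₁ hx₂
  exact eq_of_norm_le_of_inner_eq_mul_norm hx₁ hx₂ hb₁v hb₂v

/-- partial uniqueness for the dual problem: If `b₁, b₂` both satisfy
`|bᵢ(x)| ≤ a(x)` a.e. and `∫ a|v| = ∫ bᵢ·v`, then `b₁ = b₂` a.e. on the set
`{x : v(x) ≠ 0 or a(x) = 0}`, i.e. on `Ω ∖ {x : v(x) = 0 and a(x) ≠ 0}`. -/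
theorem stmt_5 {n : ℕ} (hn : 2 ≤ n) (Ω : Set (EuclideanSpace ℝ (Fin n)))
    (hΩopen : IsOpen Ω) (hΩbdd : Bornology.IsBounded Ω)
    (μ : Measure (EuclideanSpace ℝ (Fin n))) (hμ : μ = volume.restrict Ω)
    (a : EuclideanSpace ℝ (Fin n) → ℝ) (ha2 : MemLp a 2 μ) (ha0 : ∀ᵐ x ∂μ, 0 ≤ a x)
    (v b₁ b₂ : EuclideanSpace ℝ (Fin n) → EuclideanSpace ℝ (Fin n))
    (hv : MemLp v 2 μ) (hb₁ : MemLp b₁ 2 μ) (hb₂ : MemLp b₂ 2 μ)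
    (hba₁ : ∀ᵐ x ∂μ, ‖b₁ x‖ ≤ a x) (hba₂ : ∀ᵐ x ∂μ, ‖b₂ x‖ ≤ a x)
    (heq₁ : ∫ x, a x * ‖v x‖ ∂μ = ∫ x, ⟪b₁ x, v x⟫ ∂μ)
    (heq₂ : ∫ x, a x * ‖v x‖ ∂μ = ∫ x, ⟪b₂ x, v x⟫ ∂μ) :
    ∀ᵐ x ∂μ, (v x ≠ 0 ∨ a x = 0) → b₁ x = b₂ x :=
  stmt_5_general μ a ha2 v b₁ b₂ hv hb₁ hb₂ hba₁ hba₂ heq₁ heq₂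
end

section
/- Let a ∈ L²(Ω) be nonnegative, g ∈ L²(Ω;ℝⁿ), and b ∈ L²(Ω;ℝⁿ) with |b(x)| ≤ a(x) for a.e. x ∈ Ω and with b weakly divergence-free, i.e. ∫_Ω b(x)·∇φ(x) dx = 0 for every smooth compactly supported φ : Ω → ℝ. Then for every smooth compactly supported φ : Ω → ℝ one has ∫_Ω a(x)|∇φ(x) + g(x)| dx ≥ ∫_Ω b(x)·g(x) dx. -/
open MeasureTheory RealInnerProductSpace

private lemma inner_integrable_of_memL2 {α : Type*} {m : MeasurableSpace α} {μ : Measure α}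
    {E : Type*} [NormedAddCommGroup E] [InnerProductSpace ℝ E]
    {f h : α → E} (hf : MemLp f 2 μ) (hh : MemLp h 2 μ) :
    Integrable (fun x => ⟪f x, h x⟫) μ := by
  have hmul : MemLp (fun x => ‖f x‖ * ‖h x‖) 1 μ := by
    have := (hh.norm).smul (hf.norm) (p := 2) (q := 2) (r := 1)
      (hpqr := ⟨by rw [ENNReal.inv_two_add_inv_two, inv_one]⟩)
    simpa [smul_eq_mul, Pi.mul_def] using this
  have hint : Integrable (fun x => ‖f x‖ * ‖h x‖) μ := memLp_one_iff_integrable.1 hmul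
  refine hint.mono' (hf.1.inner hh.1) ?_
  filter_upwards with x
  simpa using abs_real_inner_le_norm (f x) (h x)

/-- weak duality: If `|b(x)| ≤ a(x)` a.e. and `b` is weakly
divergence-free (`∫ b·∇φ = 0` for all smooth compactly supported `φ` in `Ω`),
then for every smooth compactly supported `φ` in `Ω`,
`∫ a |∇φ + g| ≥ ∫ b·g`. -/
theorem stmt_6 {n : ℕ} (hn : 2 ≤ n) (Ω : Set (EuclideanSpace ℝ (Fin n)))
    (hΩopen : IsOpen Ω) (hΩbdd : Bornology.IsBounded Ω)
    (μ : Measure (EuclideanSpace ℝ (Fin n))) (hμ : μ = volume.restrict Ω)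
    (a : EuclideanSpace ℝ (Fin n) → ℝ) (ha2 : MemLp a 2 μ) (ha0 : ∀ᵐ x ∂μ, 0 ≤ a x)
    (g b : EuclideanSpace ℝ (Fin n) → EuclideanSpace ℝ (Fin n))
    (hg : MemLp g 2 μ) (hb : MemLp b 2 μ)
    (hba : ∀ᵐ x ∂μ, ‖b x‖ ≤ a x)
    (hdivfree : ∀ φ : EuclideanSpace ℝ (Fin n) → ℝ,
      ContDiff ℝ (⊤ : ℕ∞) φ → HasCompactSupport φ → tsupport φ ⊆ Ω →
      ∫ x, ⟪b x, gradient φ x⟫ ∂μ = 0) :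
    ∀ φ : EuclideanSpace ℝ (Fin n) → ℝ,
      ContDiff ℝ (⊤ : ℕ∞) φ → HasCompactSupport φ → tsupport φ ⊆ Ω →
      (∫ x, ⟪b x, g x⟫ ∂μ) ≤ ∫ x, a x * ‖gradient φ x + g x‖ ∂μ := by
  intro φ hφsm hφc hφΩ
  -- gradient is continuous with compact support
  have hgc : Continuous (gradient φ) := by
    have h1 : Continuous (fderiv ℝ φ) := (hφsm.continuous_fderiv (by simp))
    have : gradient φ = fun x => (InnerProductSpace.toDual ℝ _).symm (fderiv ℝ φ x) := rfl
    rw [this]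
    exact (InnerProductSpace.toDual ℝ _).symm.continuous.comp h1
  have hgcs : HasCompactSupport (gradient φ) := by
    have h2 : HasCompactSupport (fderiv ℝ φ) := hφc.fderiv ℝ
    have : gradient φ = (fun L => (InnerProductSpace.toDual ℝ _).symm L) ∘ (fderiv ℝ φ) := rfl
    rw [this]
    exact h2.comp_left (by simp)
  have hgrad2 : MemLp (gradient φ) 2 μ := by
    rw [hμ]
    exact (hgc.memLp_of_hasCompactSupport hgcs).restrict Ω
  set v : EuclideanSpace ℝ (Fin n) → EuclideanSpace ℝ (Fin n) :=
    fun x => gradient φ x + g x with hv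
  have hv2 : MemLp v 2 μ := hgrad2.add hg
  have hint_bv : Integrable (fun x => ⟪b x, v x⟫) μ := inner_integrable_of_memL2 hb hv2
  have hint_bg : Integrable (fun x => ⟪b x, g x⟫) μ := inner_integrable_of_memL2 hb hg
  have hint_bgrad : Integrable (fun x => ⟪b x, gradient φ x⟫) μ :=
    inner_integrable_of_memL2 hb hgrad2
  have hint_av : Integrable (fun x => a x * ‖v x‖) μ := by
    have hmul : MemLp (fun x => a x * ‖v x‖) 1 μ := by
      have := (hv2.norm).smul ha2 (p := 2) (q := 2) (r := 1)
        (hpqr := ⟨by rw [ENNReal.inv_two_add_inv_two, inv_one]⟩)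
      simpa [smul_eq_mul, Pi.mul_def] using this
    exact memLp_one_iff_integrable.1 hmul
  have hsplit : ∫ x, ⟪b x, v x⟫ ∂μ = ∫ x, ⟪b x, g x⟫ ∂μ := by
    have : (fun x => ⟪b x, v x⟫) = fun x => ⟪b x, gradient φ x⟫ + ⟪b x, g x⟫ := by
      funext x; simp [hv, inner_add_right]
    rw [this, integral_add hint_bgrad hint_bg, hdivfree φ hφsm hφc hφΩ, zero_add]
  rw [← hsplit]
  refine integral_mono_ae hint_bv hint_av ?_
  filter_upwards [hba] with x hx
  calc ⟪b x, v x⟫ ≤ ‖b x‖ * ‖v x‖ := real_inner_le_norm _ _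
    _ ≤ a x * ‖v x‖ := by
        exact mul_le_mul_of_nonneg_right hx (norm_nonneg _)
end

section
/- Let α ≥ 0 and λ > 0 be real numbers and let c be a vector in ℝⁿ (with the Euclidean norm). Define z* := max(|c| − α/λ, 0) · c/|c| if c ≠ 0, and z* := 0 if c = 0. Then z* is the unique minimizer over ℝⁿ of the function z ↦ α|z| + (λ/2)|c − z|²; that is, for every z ∈ ℝⁿ one has α|z*| + (λ/2)|c − z*|² ≤ α|z| + (λ/2)|c − z|², with equality only when z = z*. -/
/-!
The objective `f z = α‖z‖ + (λ/2)‖c - z‖²` is `λ`-strongly convex, and `z*` satisfies the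
first-order condition `λ (c - z*) ∈ α ∂‖·‖(z*)`, i.e. `λ⟪c - z*, z - z*⟫ ≤ α (‖z‖ - ‖z*‖)`
for every `z` (for `z* = 0` this is Cauchy–Schwarz together with `λ‖c‖ ≤ α`; otherwise
`λ (c - z*)` is `α` times the unit vector along `z*`). Expanding `‖c - z‖²` around `z*` then gives
`f z* + (λ/2)‖z - z*‖² ≤ f z`, which is minimality and uniqueness at once.
-/

open RealInnerProductSpace

section Shrinkage

variable {E : Type*} [NormedAddCommGroup E] [InnerProductSpace ℝ E]

noncomputable def shrinkageObjective (α lam : ℝ) (c z : E) : ℝ :=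
  α * ‖z‖ + lam / 2 * ‖c - z‖ ^ 2

-- The paper's separate case `c = 0` is not needed: the scalar then multiplies `0`.
noncomputable def softThreshold (α lam : ℝ) (c : E) : E :=
  (max (‖c‖ - α / lam) 0 / ‖c‖) • c

theorem shrinkageObjective_add_le_of_inner_le {α lam : ℝ} {c w z : E}
    (h : lam * ⟪c - w, z - w⟫ ≤ α * (‖z‖ - ‖w‖)) :
    shrinkageObjective α lam c w + lam / 2 * ‖z - w‖ ^ 2 ≤ shrinkageObjective α lam c z := by
  have hexpand : ‖c - z‖ ^ 2 = ‖c - w‖ ^ 2 - 2 * ⟪c - w, z - w⟫ + ‖z - w‖ ^ 2 := by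
    rw [← norm_sub_sq_real, sub_sub_sub_cancel_right]
  unfold shrinkageObjective
  rw [hexpand]
  linarith

theorem softThreshold_of_norm_le {α lam : ℝ} {c : E} (h : ‖c‖ ≤ α / lam) :
    softThreshold α lam c = 0 := by
  simp [softThreshold, max_eq_right (sub_nonpos.mpr h)]

theorem inner_sub_softThreshold_le {α lam : ℝ} (hα : 0 ≤ α) (hlam : 0 < lam) (c z : E) :
    lam * ⟪c - softThreshold α lam c, z - softThreshold α lam c⟫ ≤
      α * (‖z‖ - ‖softThreshold α lam c‖) := by
  have hcs : ⟪c, z⟫ ≤ ‖c‖ * ‖z‖ := real_inner_le_norm c z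
  rcases le_or_gt ‖c‖ (α / lam) with hsmall | hlarge
  · rw [softThreshold_of_norm_le hsmall]
    have : lam * ‖c‖ ≤ α := (le_div_iff₀' hlam).mp hsmall
    simp only [sub_zero, norm_zero]
    nlinarith [norm_nonneg z]
  · set r := ‖c‖ with hr_def
    set a := α / lam
    have hr : 0 < r := (div_nonneg hα hlam.le).trans_lt hlarge
    have hstar : softThreshold α lam c = ((r - a) / r) • c := by
      rw [softThreshold, max_eq_left (sub_nonneg.mpr hlarge.le)]
    have hres : c - softThreshold α lam c = (a / r) • c := by
      rw [hstar]
      nth_rewrite 1 [← one_smul ℝ c]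
      rw [← sub_smul]
      congr 1
      field_simp
      ring
    have hnorm : ‖softThreshold α lam c‖ = r - a := by
      rw [hstar, norm_smul, Real.norm_of_nonneg (div_nonneg (by linarith) hr.le),
        div_mul_cancel₀ _ hr.ne']
    have hinner : ⟪c, softThreshold α lam c⟫ = (r - a) * r := by
      rw [hstar, real_inner_smul_right, real_inner_self_eq_norm_sq, ← hr_def]
      field_simp
    have hlam_a : lam * a = α := mul_div_cancel₀ α hlam.ne'
    have hcs' : α / r * ⟪c, z⟫ ≤ α * ‖z‖ := by
      rw [div_mul_eq_mul_div, div_le_iff₀ hr, mul_assoc, mul_comm ‖z‖]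
      exact mul_le_mul_of_nonneg_left hcs hα
    rw [hres, hnorm, real_inner_smul_left, inner_sub_right, hinner]
    calc lam * (a / r * (⟪c, z⟫ - (r - a) * r)) = α / r * ⟪c, z⟫ - α * (r - a) := by
          rw [← hlam_a]
          field_simp
      _ ≤ α * (‖z‖ - (r - a)) := by linarith

theorem shrinkageObjective_softThreshold_add_le {α lam : ℝ} (hα : 0 ≤ α) (hlam : 0 < lam)
    (c z : E) :
    shrinkageObjective α lam c (softThreshold α lam c) + lam / 2 * ‖z - softThreshold α lam c‖ ^ 2
      ≤ shrinkageObjective α lam c z :=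
  shrinkageObjective_add_le_of_inner_le (inner_sub_softThreshold_le hα hlam c z)

end Shrinkage

open Classical in
/-- pointwise shrinkage/soft-thresholding: For `α ≥ 0`, `λ > 0` and
`c ∈ ℝⁿ`, the vector `z* = max(|c| - α/λ, 0) · c/|c|` (with `z* = 0` if `c = 0`)
is the unique minimizer over `ℝⁿ` of `z ↦ α|z| + (λ/2)|c - z|²`. -/
theorem stmt_7 {n : ℕ} (α lam : ℝ) (hα : 0 ≤ α) (hlam : 0 < lam)
    (c zstar : EuclideanSpace ℝ (Fin n))
    (hz : zstar = if c = 0 then 0 else ((max (‖c‖ - α / lam) 0) / ‖c‖) • c) :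
    ∀ z : EuclideanSpace ℝ (Fin n),
      (α * ‖zstar‖ + lam / 2 * ‖c - zstar‖ ^ 2 ≤ α * ‖z‖ + lam / 2 * ‖c - z‖ ^ 2) ∧
      (α * ‖z‖ + lam / 2 * ‖c - z‖ ^ 2 = α * ‖zstar‖ + lam / 2 * ‖c - zstar‖ ^ 2 →
        z = zstar) := by
  have hzstar : zstar = softThreshold α lam c := by
    rw [hz, softThreshold]
    split_ifs with hc <;> simp [hc]
  subst hzstar
  intro z
  have key := shrinkageObjective_softThreshold_add_le hα hlam c z
  unfold shrinkageObjective at key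
  have hgap : 0 ≤ lam / 2 * ‖z - softThreshold α lam c‖ ^ 2 := by positivity
  refine ⟨by linarith, fun heq => ?_⟩
  have hzero : lam / 2 * ‖z - softThreshold α lam c‖ ^ 2 = 0 := by linarith
  simpa [hlam.ne', sub_eq_zero] using hzero
end

section
/- Let H be a real Hilbert space, λ > 0, and let A, B : H → Set(H) be maximal monotone set-valued operators. Let J_{λA}, J_{λB} : H → H be their resolvents, i.e. for every x ∈ H, x − J_{λA}(x) ∈ λ·A(J_{λA}(x)) and x − J_{λB}(x) ∈ λ·B(J_{λB}(x)). Assume there exists z ∈ H with 0 ∈ A(z) + B(z), i.e. there exists w ∈ A(z) with −w ∈ B(z). Given any x₀, p₀ ∈ H, define for k ≥ 0: x_{k+1} = J_{λA}(2 p_k − x_k) + x_k − p_k and p_{k+1} = J_{λB}(x_{k+1}). Then there exist x̂, p̂ ∈ H such that x_k converges weakly to x̂ (i.e. ⟨x_k, w⟩ → ⟨x̂, w⟩ for every w ∈ H) and p_k converges weakly to p̂; moreover p̂ = J_{λB}(x̂) and 0 ∈ A(p̂) + B(p̂). -/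
open RealInnerProductSpace Filter Topology

/-- A set-valued operator on a real Hilbert space is monotone if
`⟨x₁ - x₂, y₁ - y₂⟩ ≥ 0` whenever `y₁ ∈ A x₁`, `y₂ ∈ A x₂`. -/
def IsMonotoneOp {H : Type*} [NormedAddCommGroup H] [InnerProductSpace ℝ H]
    (A : H → Set H) : Prop :=
  ∀ x₁ x₂ y₁ y₂ : H, y₁ ∈ A x₁ → y₂ ∈ A x₂ → 0 ≤ ⟪x₁ - x₂, y₁ - y₂⟫

/-- A monotone operator is maximal monotone if its graph is not properly contained
in the graph of any monotone operator; equivalently, any pair `(x, y)` monotonically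
related to the graph of `A` belongs to the graph of `A`. -/
def IsMaximalMonotoneOp {H : Type*} [NormedAddCommGroup H] [InnerProductSpace ℝ H]
    (A : H → Set H) : Prop :=
  IsMonotoneOp A ∧
    ∀ x y : H, (∀ x' y' : H, y' ∈ A x' → 0 ≤ ⟪x - x', y - y'⟫) → y ∈ A x

/-!
The Douglas–Rachford map `T u = J_{λA}(2 J_{λB} u - u) + u - J_{λB} u` is firmly nonexpansive,
and `p + λ b` is a fixed point of `T` whenever `b ∈ B p` and `-b ∈ A p`; so a zero of `A + B`
gives a fixed point, and the orbit `x_k` is bounded, Fejér monotone and asymptotically regular.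
If `(x_k, p_k)` converges weakly to `(x̄, p̄)` along an ultrafilter, then monotonicity of `A` and
`B` passes to the limit as one inequality coupling the two operators, and the zero of `A + B`
lets maximality of one of them and then of the other split it into `b̄ ∈ B p̄` and `-b̄ ∈ A p̄`
for `b̄ = (x̄ - p̄)/λ`. Hence every weak cluster point `x̄` is a fixed point with
`p̄ = J_{λB} x̄`, Opial's argument makes the cluster point of `x_k` unique, and `p_k` converges
weakly to `J_{λB} x̂` even though `J_{λB}` is not weakly continuous.
-/

section

open Function

variable {H : Type*} [NormedAddCommGroup H] [InnerProductSpace ℝ H]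

def WeakTendsto {ι : Type*} (y : ι → H) (l : Filter ι) (a : H) : Prop :=
  ∀ w, Tendsto (fun k => ⟪y k, w⟫) l (𝓝 ⟪a, w⟫)

namespace WeakTendsto

variable {ι : Type*} {y y' : ι → H} {l l' : Filter ι} {a a' : H}

theorem mono_left (h : WeakTendsto y l a) (hl : l' ≤ l) : WeakTendsto y l' a :=
  fun w => (h w).mono_left hl

theorem sub (h : WeakTendsto y l a) (h' : WeakTendsto y' l a') :
    WeakTendsto (fun k => y k - y' k) l (a - a') := fun w => by
  simpa only [inner_sub_left] using (h w).sub (h' w)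

theorem const_smul (h : WeakTendsto y l a) (c : ℝ) :
    WeakTendsto (fun k => c • y k) l (c • a) := fun w => by
  simpa only [real_inner_smul_left] using (h w).const_mul c

theorem add_tendsto (h : WeakTendsto y l a) (h' : Tendsto y' l (𝓝 a')) :
    WeakTendsto (fun k => y k + y' k) l (a + a') := fun w => by
  simpa only [inner_add_left] using (h w).add (h'.inner tendsto_const_nhds)

theorem sub_tendsto (h : WeakTendsto y l a) (h' : Tendsto y' l (𝓝 a')) :
    WeakTendsto (fun k => y k - y' k) l (a - a') := fun w => by
  simpa only [inner_sub_left] using (h w).sub (h'.inner tendsto_const_nhds)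

theorem of_forall_ultrafilter (h : ∀ U : Ultrafilter ι, (U : Filter ι) ≤ l → WeakTendsto y U a) :
    WeakTendsto y l a :=
  fun w => (tendsto_iff_ultrafilter _ _ _).2 fun U hU => h U hU w

theorem exists_of_norm_le [CompleteSpace H] (U : Ultrafilter ι) {R : ℝ} (hR : ∀ k, ‖y k‖ ≤ R) :
    ∃ a, WeakTendsto y U a := by
  have hlim (w : H) : ∃ c, Tendsto (fun k => ⟪y k, w⟫) U (𝓝 c) := by
    have hmem : ∀ k, ⟪y k, w⟫ ∈ Metric.closedBall (0 : ℝ) (R * ‖w‖) := fun k => by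
      rw [mem_closedBall_zero_iff]
      exact (norm_inner_le_norm _ _).trans (mul_le_mul_of_nonneg_right (hR k) (norm_nonneg w))
    obtain ⟨c, -, hc⟩ := (isCompact_closedBall (0 : ℝ) (R * ‖w‖)).ultrafilter_le_nhds
      (U.map fun k => ⟪y k, w⟫)
      (by rw [Ultrafilter.coe_map, le_principal_iff]; exact mem_map.2 (Eventually.of_forall hmem))
    exact ⟨c, hc⟩
  choose c hc using hlim
  let φ : H →ₗ[ℝ] ℝ :=
    { toFun := c
      map_add' := fun w₁ w₂ => tendsto_nhds_unique (hc (w₁ + w₂))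
        (by simpa only [inner_add_right] using (hc w₁).add (hc w₂))
      map_smul' := fun r w => show c (r • w) = r * c w from tendsto_nhds_unique (hc (r • w))
        (by simpa only [real_inner_smul_right] using (hc w).const_mul r) }
  have hφ (w : H) : ‖φ w‖ ≤ R * ‖w‖ :=
    le_of_tendsto (hc w).norm <| Eventually.of_forall fun k =>
      (norm_inner_le_norm _ _).trans (mul_le_mul_of_nonneg_right (hR k) (norm_nonneg w))
  refine ⟨(InnerProductSpace.toDual ℝ H).symm (φ.mkContinuous R hφ), fun w => ?_⟩
  rw [InnerProductSpace.toDual_symm_apply]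
  exact hc w

-- Opial: `‖y k - a‖² - ‖y k - a'‖²` converges along `L`, hence so does `⟪y k, a - a'⟫`,
-- and its limit equals both `⟪a, a - a'⟫` and `⟪a', a - a'⟫`.
theorem eq_of_tendsto_norm_sub {L : Filter ι} [l.NeBot] [l'.NeBot] (hl : l ≤ L) (hl' : l' ≤ L)
    (h : WeakTendsto y l a) (h' : WeakTendsto y l' a') {r r' : ℝ}
    (hr : Tendsto (fun k => ‖y k - a‖) L (𝓝 r)) (hr' : Tendsto (fun k => ‖y k - a'‖) L (𝓝 r')) :
    a = a' := by
  have hpol (k : ι) :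
      ⟪y k, a - a'⟫ = (‖a‖ ^ 2 - ‖a'‖ ^ 2 - (‖y k - a‖ ^ 2 - ‖y k - a'‖ ^ 2)) / 2 := by
    rw [norm_sub_sq_real, norm_sub_sq_real, inner_sub_right]
    ring
  have hL : Tendsto (fun k => ⟪y k, a - a'⟫) L
      (𝓝 ((‖a‖ ^ 2 - ‖a'‖ ^ 2 - (r ^ 2 - r' ^ 2)) / 2)) := by
    simp_rw [hpol]
    exact (tendsto_const_nhds.sub ((hr.pow 2).sub (hr'.pow 2))).div_const 2
  have e : ⟪a, a - a'⟫ = ⟪a', a - a'⟫ :=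
    (tendsto_nhds_unique (h _) (hL.mono_left hl)).trans
      (tendsto_nhds_unique (h' _) (hL.mono_left hl')).symm
  rw [← sub_eq_zero, ← inner_sub_left, inner_self_eq_zero, sub_eq_zero] at e
  exact e

end WeakTendsto

def IsResolvent (lam : ℝ) (Op : H → Set H) (J : H → H) : Prop :=
  ∀ x, ∃ w ∈ Op (J x), x - J x = lam • w

namespace IsResolvent

variable {lam : ℝ} {Op : H → Set H} {J : H → H}

theorem smul_inv_sub_mem (hJ : IsResolvent lam Op J) (hlam : lam ≠ 0) (x : H) :
    lam⁻¹ • (x - J x) ∈ Op (J x) := by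
  obtain ⟨w, hw, hx⟩ := hJ x
  rwa [hx, inv_smul_smul₀ hlam]

theorem eq_of_sub_eq_smul (hJ : IsResolvent lam Op J) (hOp : IsMonotoneOp Op) (hlam : 0 ≤ lam)
    {x u b : H} (hb : b ∈ Op u) (hx : x - u = lam • b) : J x = u := by
  obtain ⟨w, hw, hJx⟩ := hJ x
  have hmono : 0 ≤ lam * ⟪J x - u, w - b⟫ := mul_nonneg hlam (hOp _ _ _ _ hw hb)
  have hsub : lam • (w - b) = -(J x - u) := by
    rw [smul_sub, ← hJx, ← hx]
    abel
  rw [← real_inner_smul_right, hsub, inner_neg_right, real_inner_self_eq_norm_sq] at hmono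
  rw [← sub_eq_zero, ← norm_eq_zero]
  nlinarith [norm_nonneg (J x - u)]

theorem inner_self_sub_le (hJ : IsResolvent lam Op J) (hOp : IsMonotoneOp Op) (hlam : 0 ≤ lam)
    (u v : H) : ⟪J u - J v, J u - J v⟫ ≤ ⟪J u - J v, u - v⟫ := by
  obtain ⟨wu, hwu, hu⟩ := hJ u
  obtain ⟨wv, hwv, hv⟩ := hJ v
  have hmono : 0 ≤ lam * ⟪J u - J v, wu - wv⟫ := mul_nonneg hlam (hOp _ _ _ _ hwu hwv)
  have hsub : lam • (wu - wv) = (u - v) - (J u - J v) := by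
    rw [smul_sub, ← hu, ← hv]
    abel
  rw [← real_inner_smul_right, hsub, inner_sub_right] at hmono
  linarith

theorem norm_sub_le (hJ : IsResolvent lam Op J) (hOp : IsMonotoneOp Op) (hlam : 0 ≤ lam)
    (u v : H) : ‖J u - J v‖ ≤ ‖u - v‖ := by
  have h := (hJ.inner_self_sub_le hOp hlam u v).trans (real_inner_le_norm _ _)
  rw [real_inner_self_eq_norm_sq] at h
  nlinarith [norm_nonneg (J u - J v), norm_nonneg (u - v)]

end IsResolvent

def FirmlyNonexpansive {E : Type*} [SeminormedAddCommGroup E] (T : E → E) : Prop :=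
  ∀ u v, ‖T u - T v‖ ^ 2 + ‖(u - T u) - (v - T v)‖ ^ 2 ≤ ‖u - v‖ ^ 2

namespace FirmlyNonexpansive

variable {E : Type*} [SeminormedAddCommGroup E] {T : E → E} {X : ℕ → E} {f : E}

theorem norm_sub_le (hT : FirmlyNonexpansive T) (u v : E) : ‖T u - T v‖ ≤ ‖u - v‖ :=
  (pow_le_pow_iff_left₀ (norm_nonneg _) (norm_nonneg _) two_ne_zero).1 <| by
    linarith [hT u v, sq_nonneg ‖(u - T u) - (v - T v)‖]

theorem antitone_norm_sub (hT : FirmlyNonexpansive T) (hX : ∀ k, X (k + 1) = T (X k))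
    (hf : IsFixedPt T f) : Antitone fun k => ‖X k - f‖ :=
  antitone_nat_of_succ_le fun k => by
    simpa only [hX, hf.eq] using hT.norm_sub_le (X k) f

theorem tendsto_sub_succ (hT : FirmlyNonexpansive T) (hX : ∀ k, X (k + 1) = T (X k))
    (hf : IsFixedPt T f) : Tendsto (fun k => X (k + 1) - X k) atTop (𝓝 0) := by
  have hstep (k : ℕ) : ‖X (k + 1) - X k‖ ^ 2 ≤ ‖X k - f‖ ^ 2 - ‖X (k + 1) - f‖ ^ 2 := by
    have h := hT (X k) f
    rw [← hX, hf.eq, sub_self, sub_zero, norm_sub_rev (X k)] at h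
    linarith
  have hr := tendsto_atTop_ciInf (hT.antitone_norm_sub hX hf)
    ⟨0, by rintro _ ⟨k, rfl⟩; exact norm_nonneg _⟩
  have hdiff : Tendsto (fun k => ‖X k - f‖ ^ 2 - ‖X (k + 1) - f‖ ^ 2) atTop (𝓝 0) := by
    simpa using (hr.pow 2).sub ((tendsto_add_atTop_iff_nat 1).2 (hr.pow 2))
  have hsq : Tendsto (fun k => ‖X (k + 1) - X k‖ ^ 2) atTop (𝓝 0) :=
    squeeze_zero (fun k => sq_nonneg _) hstep hdiff
  rw [tendsto_zero_iff_norm_tendsto_zero]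
  simpa [Real.sqrt_sq (norm_nonneg _)] using hsq.sqrt

end FirmlyNonexpansive

theorem exists_weakTendsto_of_antitone_norm_sub [CompleteSpace H] {y : ℕ → H} {F : Set H}
    (hF : ∀ f ∈ F, Antitone fun k => ‖y k - f‖) (hne : F.Nonempty)
    (hcl : ∀ U : Ultrafilter ℕ, (U : Filter ℕ) ≤ atTop → ∀ a, WeakTendsto y U a → a ∈ F) :
    ∃ a, WeakTendsto y atTop a := by
  obtain ⟨f, hf⟩ := hne
  have hbdd (k : ℕ) : ‖y k‖ ≤ ‖y 0 - f‖ + ‖f‖ :=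
    (norm_le_norm_sub_add (y k) f).trans (by gcongr; exact hF f hf (Nat.zero_le k))
  have hconv (a : H) (ha : a ∈ F) : Tendsto (fun k => ‖y k - a‖) atTop (𝓝 _) :=
    tendsto_atTop_ciInf (hF a ha) ⟨0, by rintro _ ⟨k, rfl⟩; exact norm_nonneg _⟩
  obtain ⟨a, ha⟩ := WeakTendsto.exists_of_norm_le (Ultrafilter.of atTop) hbdd
  have haF := hcl _ (Ultrafilter.of_le _) a ha
  refine ⟨a, WeakTendsto.of_forall_ultrafilter fun U hU => ?_⟩
  obtain ⟨a', ha'⟩ := WeakTendsto.exists_of_norm_le U hbdd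
  rwa [ha.eq_of_tendsto_norm_sub (Ultrafilter.of_le _) hU ha' (hconv a haF)
    (hconv a' (hcl U hU a' ha'))]

section MonotoneOp

variable {A B : H → Set H} {p b : H}

theorem inner_add_inner_nonneg_of_weakTendsto {ι : Type*} (hA : IsMonotoneOp A)
    (hB : IsMonotoneOp B) {l : Filter ι} [l.NeBot] {P Q Bv Av : ι → H}
    (hBv : ∀ k, Bv k ∈ B (P k)) (hAv : ∀ k, Av k ∈ A (Q k)) (hP : WeakTendsto P l p)
    (hQ : WeakTendsto Q l p) (hb : WeakTendsto Bv l b) (ha : WeakTendsto Av l (-b))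
    (hinner : Tendsto (fun k => ⟪P k, Bv k⟫ + ⟪Q k, Av k⟫) l (𝓝 0))
    {u v u' v' : H} (hv : v ∈ B u) (hv' : v' ∈ A u') :
    0 ≤ ⟪p - u, b - v⟫ + ⟪p - u', -b - v'⟫ := by
  have hexpand (k : ι) : ⟪P k - u, Bv k - v⟫ + ⟪Q k - u', Av k - v'⟫ =
      (⟪P k, Bv k⟫ + ⟪Q k, Av k⟫) - ⟪P k, v⟫ - ⟪Bv k, u⟫ + ⟪u, v⟫ - ⟪Q k, v'⟫ - ⟪Av k, u'⟫
        + ⟪u', v'⟫ := by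
    simp only [inner_sub_left, inner_sub_right, real_inner_comm u, real_inner_comm u']
    ring
  have hlimit : ⟪p - u, b - v⟫ + ⟪p - u', -b - v'⟫ =
      0 - ⟪p, v⟫ - ⟪b, u⟫ + ⟪u, v⟫ - ⟪p, v'⟫ - ⟪-b, u'⟫ + ⟪u', v'⟫ := by
    simp only [inner_sub_left, inner_sub_right, inner_neg_right,
      real_inner_comm u, real_inner_comm u']
    ring
  have hlim : Tendsto (fun k => ⟪P k - u, Bv k - v⟫ + ⟪Q k - u', Av k - v'⟫) l
      (𝓝 (⟪p - u, b - v⟫ + ⟪p - u', -b - v'⟫)) := by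
    rw [hlimit]
    simp_rw [hexpand]
    exact (((((hinner.sub (hP v)).sub (hb u)).add_const _).sub (hQ v')).sub (ha u')).add_const _
  exact ge_of_tendsto hlim (Eventually.of_forall fun k =>
    add_nonneg (hB _ _ _ _ (hBv k) hv) (hA _ _ _ _ (hAv k) hv'))

-- A zero `z` of `A + B` decides which of the two inner products is `≤ 0`; maximality of
-- that operator gives the first membership, and then maximality of the other one the second.
theorem mem_of_inner_add_inner_nonneg (hA : IsMaximalMonotoneOp A) (hB : IsMaximalMonotoneOp B)
    (hzero : ∃ z, ∃ w ∈ A z, -w ∈ B z)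
    (h : ∀ u v u' v', v ∈ B u → v' ∈ A u' → 0 ≤ ⟪p - u, b - v⟫ + ⟪p - u', -b - v'⟫) :
    b ∈ B p ∧ -b ∈ A p := by
  obtain ⟨z, w, hwA, hwB⟩ := hzero
  rcases le_total ⟪p - z, -b - w⟫ 0 with hc | hc
  · have hbB : b ∈ B p := hB.2 p b fun u v hv => by linarith [h u v z w hv hwA]
    exact ⟨hbB, hA.2 p (-b) fun u' v' hv' => by simpa using h p b u' v' hbB hv'⟩
  · have hc' : ⟪p - z, b - -w⟫ ≤ 0 := by
      rw [← neg_neg (b - -w), inner_neg_right, neg_sub', neg_neg]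
      linarith
    have hbA : -b ∈ A p := hA.2 p (-b) fun u' v' hv' => by linarith [h z (-w) u' v' hwB hv']
    exact ⟨hB.2 p b fun u v hv => by simpa using h u v p (-b) hv hbA, hbA⟩

end MonotoneOp

def douglasRachford (JA JB : H → H) (u : H) : H := JA ((2 : ℝ) • JB u - u) + u - JB u

section DouglasRachford

variable {lam : ℝ} {A B : H → Set H} {JA JB : H → H} {X : ℕ → H}

theorem firmlyNonexpansive_douglasRachford (hlam : 0 ≤ lam) (hA : IsMonotoneOp A)
    (hB : IsMonotoneOp B) (hJA : IsResolvent lam A JA) (hJB : IsResolvent lam B JB) :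
    FirmlyNonexpansive (douglasRachford JA JB) := by
  intro u v
  have hαB := hJB.inner_self_sub_le hB hlam u v
  have hβA := hJA.inner_self_sub_le hA hlam ((2 : ℝ) • JB u - u) ((2 : ℝ) • JB v - v)
  set α := JB u - JB v
  set β := JA ((2 : ℝ) • JB u - u) - JA ((2 : ℝ) • JB v - v)
  set γ := u - v
  have hreflect : (2 : ℝ) • JB u - u - ((2 : ℝ) • JB v - v) = (2 : ℝ) • α - γ := by
    simp only [α, γ, smul_sub]
    abel
  have hT : douglasRachford JA JB u - douglasRachford JA JB v = β + γ - α := by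
    simp only [douglasRachford, α, β, γ]
    abel
  have hId : (u - douglasRachford JA JB u) - (v - douglasRachford JA JB v) = α - β := by
    simp only [douglasRachford, α, β]
    abel
  rw [hreflect] at hβA
  rw [hT, hId, ← real_inner_self_eq_norm_sq, ← real_inner_self_eq_norm_sq,
    ← real_inner_self_eq_norm_sq]
  simp only [inner_add_left, inner_add_right, inner_sub_left, inner_sub_right,
    real_inner_smul_right] at hβA ⊢
  linarith [real_inner_comm α β, real_inner_comm α γ, real_inner_comm β γ]

theorem isFixedPt_douglasRachford (hlam : 0 ≤ lam) (hA : IsMonotoneOp A) (hB : IsMonotoneOp B)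
    (hJA : IsResolvent lam A JA) (hJB : IsResolvent lam B JB) {p b : H} (hbB : b ∈ B p)
    (hbA : -b ∈ A p) :
    JB (p + lam • b) = p ∧ IsFixedPt (douglasRachford JA JB) (p + lam • b) := by
  have hJBp : JB (p + lam • b) = p := hJB.eq_of_sub_eq_smul hB hlam hbB (add_sub_cancel_left _ _)
  have hJAp : JA ((2 : ℝ) • p - (p + lam • b)) = p :=
    hJA.eq_of_sub_eq_smul hA hlam hbA (by rw [smul_neg, two_smul]; abel)
  refine ⟨hJBp, ?_⟩
  rw [IsFixedPt, douglasRachford, hJBp, hJAp]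
  abel


theorem mem_of_weakTendsto_douglasRachford (hlam : 0 < lam) (hA : IsMaximalMonotoneOp A)
    (hB : IsMaximalMonotoneOp B) (hJA : IsResolvent lam A JA) (hJB : IsResolvent lam B JB)
    (hzero : ∃ z, ∃ w ∈ A z, -w ∈ B z) (hX : ∀ k, X (k + 1) = douglasRachford JA JB (X k))
    (hD : Tendsto (fun k => X (k + 1) - X k) atTop (𝓝 0)) {R : ℝ} (hR : ∀ k, ‖X k‖ ≤ R)
    {l : Filter ℕ} [l.NeBot] (hl : l ≤ atTop) {xb pb : H} (hx : WeakTendsto X l xb)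
    (hp : WeakTendsto (fun k => JB (X k)) l pb) :
    lam⁻¹ • (xb - pb) ∈ B pb ∧ -(lam⁻¹ • (xb - pb)) ∈ A pb := by
  set P := fun k => JB (X k)
  set D := fun k => X (k + 1) - X k
  set Q := fun k => JA ((2 : ℝ) • P k - X k)
  have hQ : Q = fun k => P k + D k := by
    funext k
    simp only [Q, P, D, hX, douglasRachford]
    abel
  have hBv (k : ℕ) : lam⁻¹ • (X k - P k) ∈ B (P k) := hJB.smul_inv_sub_mem hlam.ne' (X k)
  have hAv (k : ℕ) : lam⁻¹ • ((2 : ℝ) • P k - X k - Q k) ∈ A (Q k) :=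
    hJA.smul_inv_sub_mem hlam.ne' _
  have hDl := hD.mono_left hl
  have hQw : WeakTendsto Q l pb := by
    simpa only [hQ, add_zero] using hp.add_tendsto hDl
  have hAw : WeakTendsto (fun k => lam⁻¹ • ((2 : ℝ) • P k - X k - Q k)) l
      (-(lam⁻¹ • (xb - pb))) := by
    convert ((hp.sub hx).sub_tendsto hDl).const_smul lam⁻¹ using 2
    · simp only [hQ, two_smul]
      congr 1
      abel
    · rw [sub_zero, ← smul_neg, neg_sub]
  -- the products cancel up to `-λ⁻¹ ⟪D k, X (k + 1)⟫`, and `D k → 0` while `X` is bounded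
  have hinner : Tendsto (fun k => ⟪P k, lam⁻¹ • (X k - P k)⟫ +
      ⟪Q k, lam⁻¹ • ((2 : ℝ) • P k - X k - Q k)⟫) l (𝓝 0) := by
    have hDX : Tendsto (fun k => ⟪D k, X (k + 1)⟫) l (𝓝 0) :=
      hDl.op_zero_isBoundedUnder_le (isBoundedUnder_of ⟨R, fun k => hR (k + 1)⟩) _
        norm_inner_le_norm
    convert hDX.const_mul (-lam⁻¹) using 1
    · funext k
      simp only [hQ, D, real_inner_smul_right, inner_add_left, inner_sub_right, two_smul,
        inner_add_right, real_inner_comm (P k)]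
      ring
    · rw [mul_zero]
  exact mem_of_inner_add_inner_nonneg hA hB hzero fun u v u' v' hv hv' =>
    inner_add_inner_nonneg_of_weakTendsto hA.1 hB.1 hBv hAv hp hQw
      ((hx.sub hp).const_smul lam⁻¹) hAw hinner hv hv'

theorem exists_weakTendsto_douglasRachford [CompleteSpace H] (hlam : 0 < lam)
    (hA : IsMaximalMonotoneOp A) (hB : IsMaximalMonotoneOp B) (hJA : IsResolvent lam A JA)
    (hJB : IsResolvent lam B JB) (hzero : ∃ z, ∃ w ∈ A z, -w ∈ B z)
    (hX : ∀ k, X (k + 1) = douglasRachford JA JB (X k)) :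
    ∃ xh, WeakTendsto X atTop xh ∧ WeakTendsto (fun k => JB (X k)) atTop (JB xh) ∧
      ∃ w ∈ A (JB xh), -w ∈ B (JB xh) := by
  have hT := firmlyNonexpansive_douglasRachford hlam.le hA.1 hB.1 hJA hJB
  obtain ⟨z, w, hwA, hwB⟩ := hzero
  obtain ⟨-, hf⟩ := isFixedPt_douglasRachford hlam.le hA.1 hB.1 hJA hJB hwB (by rwa [neg_neg])
  have hdist := hT.antitone_norm_sub hX hf
  have hXR (k : ℕ) : ‖X k‖ ≤ ‖X 0 - (z + lam • -w)‖ + ‖z + lam • -w‖ :=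
    (norm_le_norm_sub_add _ _).trans (by gcongr; exact hdist (Nat.zero_le k))
  have hPR (k : ℕ) : ‖JB (X k)‖ ≤ ‖X 0 - (z + lam • -w)‖ + ‖JB (z + lam • -w)‖ :=
    (norm_le_norm_sub_add _ _).trans <| by
      gcongr
      exact (hJB.norm_sub_le hB.1 hlam.le _ _).trans (hdist (Nat.zero_le k))
  have hcluster (U : Ultrafilter ℕ) (hU : (U : Filter ℕ) ≤ atTop) (xb : H)
      (hxb : WeakTendsto X U xb) :
      WeakTendsto (fun k => JB (X k)) U (JB xb) ∧ IsFixedPt (douglasRachford JA JB) xb ∧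
        ∃ w ∈ A (JB xb), -w ∈ B (JB xb) := by
    obtain ⟨pb, hpb⟩ := WeakTendsto.exists_of_norm_le U hPR
    obtain ⟨hbB, hbA⟩ := mem_of_weakTendsto_douglasRachford hlam hA hB hJA hJB
      ⟨z, w, hwA, hwB⟩ hX (hT.tendsto_sub_succ hX hf) hXR hU hxb hpb
    obtain ⟨hJ, hfix⟩ := isFixedPt_douglasRachford hlam.le hA.1 hB.1 hJA hJB hbB hbA
    rw [smul_inv_smul₀ hlam.ne', add_sub_cancel] at hJ hfix
    rw [hJ]
    exact ⟨hpb, hfix, _, hbA, by rwa [neg_neg]⟩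
  obtain ⟨xh, hxh⟩ := exists_weakTendsto_of_antitone_norm_sub
    (fun f hf => hT.antitone_norm_sub hX hf) ⟨_, hf⟩ fun U hU a ha => (hcluster U hU a ha).2.1
  refine ⟨xh, hxh, WeakTendsto.of_forall_ultrafilter fun U hU =>
    (hcluster U hU xh (hxh.mono_left hU)).1, ?_⟩
  exact (hcluster _ (Ultrafilter.of_le atTop) xh (hxh.mono_left (Ultrafilter.of_le _))).2.2

end DouglasRachford

end

theorem stmt_13_general {H : Type*} [NormedAddCommGroup H] [InnerProductSpace ℝ H]
    [CompleteSpace H] (lam : ℝ) (hlam : 0 < lam)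
    (A B : H → Set H) (hA : IsMaximalMonotoneOp A) (hB : IsMaximalMonotoneOp B)
    (JA JB : H → H)
    (hJA : ∀ x : H, ∃ w ∈ A (JA x), x - JA x = lam • w)
    (hJB : ∀ x : H, ∃ w ∈ B (JB x), x - JB x = lam • w)
    (hzero : ∃ z : H, ∃ w ∈ A z, -w ∈ B z)
    (x p : ℕ → H)
    (hxrec : ∀ k, x (k + 1) = JA ((2 : ℝ) • p k - x k) + x k - p k)
    (hprec : ∀ k, p (k + 1) = JB (x (k + 1))) :
    ∃ xhat phat : H,
      (∀ w : H, Tendsto (fun k => ⟪x k, w⟫) atTop (𝓝 ⟪xhat, w⟫)) ∧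
      (∀ w : H, Tendsto (fun k => ⟪p k, w⟫) atTop (𝓝 ⟪phat, w⟫)) ∧
      phat = JB xhat ∧ (∃ w ∈ A phat, -w ∈ B phat) := by
  -- from `k = 1` on, `x` is the Douglas–Rachford orbit and `p = J_{λB} ∘ x`
  have hX (k : ℕ) : x (k + 1 + 1) = douglasRachford JA JB (x (k + 1)) := by
    rw [hxrec, hprec]
    rfl
  obtain ⟨xhat, hx, hp, hsol⟩ :=
    exists_weakTendsto_douglasRachford (X := fun k => x (k + 1)) hlam hA hB hJA hJB hzero hX
  refine ⟨xhat, JB xhat, fun w => (tendsto_add_atTop_iff_nat 1).1 (hx w),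
    fun w => (tendsto_add_atTop_iff_nat 1).1 ?_, rfl, hsol⟩
  simpa only [hprec] using hp w

/-- Douglas–Rachford splitting; Lions–Mercier, Svaiter: Let `A, B` be
maximal monotone operators on a real Hilbert space `H` with resolvents
`J_{λA}, J_{λB}` (`λ > 0`), and suppose `0 ∈ A(z) + B(z)` for some `z`. Then the
iterates `x_{k+1} = J_{λA}(2p_k - x_k) + x_k - p_k`, `p_{k+1} = J_{λB}(x_{k+1})`
converge weakly to some `x̂` and `p̂` with `p̂ = J_{λB}(x̂)` and `0 ∈ A(p̂) + B(p̂)`. -/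
theorem stmt_13 {H : Type*} [NormedAddCommGroup H] [InnerProductSpace ℝ H]
    [CompleteSpace H] (lam : ℝ) (hlam : 0 < lam)
    (A B : H → Set H) (hA : IsMaximalMonotoneOp A) (hB : IsMaximalMonotoneOp B)
    (JA JB : H → H)
    (hJA : ∀ x : H, ∃ w ∈ A (JA x), x - JA x = lam • w)
    (hJB : ∀ x : H, ∃ w ∈ B (JB x), x - JB x = lam • w)
    (hzero : ∃ z : H, ∃ w ∈ A z, -w ∈ B z)
    (x₀ p₀ : H) (x p : ℕ → H) (hx0 : x 0 = x₀) (hp0 : p 0 = p₀)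
    (hxrec : ∀ k, x (k + 1) = JA ((2 : ℝ) • p k - x k) + x k - p k)
    (hprec : ∀ k, p (k + 1) = JB (x (k + 1))) :
    ∃ xhat phat : H,
      (∀ w : H, Tendsto (fun k => ⟪x k, w⟫) atTop (𝓝 ⟪xhat, w⟫)) ∧
      (∀ w : H, Tendsto (fun k => ⟪p k, w⟫) atTop (𝓝 ⟪phat, w⟫)) ∧
      phat = JB xhat ∧ (∃ w ∈ A phat, -w ∈ B phat) :=
  stmt_13_general lam hlam A B hA hB JA JB hJA hJB hzero x p hxrec hprec
end
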